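/- Let 2 ≤ g₁ < g₂ < … < g_e be coprime positive integers forming a minimal generating system of the numerical semigroup S = ⟨g₁,…,g_e⟩, let F be its Frobenius number and n = |S ∩ [0, F]|. If S is almost-symmetric, then F + 1 ≤ e·n (i.e., S satisfies Wilf's conjecture). -/

import Mathlib

/-!
Call a gap `x ∈ [0, F]` unmatched if `F - x` is a gap too. The matched gaps inject into
`N(S)` via `x ↦ F - x`, so `F + 1 ≤ 2n + |L|` where `L` is the set of unmatched gaps.
If `S` is almost-symmetric, both `x` and `F - x` are pseudo-Frobenius for `x ∈ L`; with `m` the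
multiplicity, `x + m ∈ S` and `F - x + m ∈ S`. When `x + m ≤ F`, `x ↦ x + m` sends `x` into
`N(S) \ {0, m}`; otherwise `F - x + m` lies in `(m, 2m)`, where every element of `S` is a minimal
generator. Hence `|L| ≤ (n - 2) + (e - 1)`, and `F + 1 ≤ 3n + e - 3 ≤ en` once `e ≥ 3`.
If `F < m`, then `[m, 2m)` consists of generators and `F + 1 ≤ m ≤ e`. For `e = 2` the semigroup
is symmetric (Sylvester), so `L = ∅`.
-/

open Set

namespace NumericalSemigroup

section Closure

variable {ι : Type*} {g : ι → ℤ} {m x : ℤ}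

theorem eq_zero_or_mem_range_or_two_mul_le (hm : 0 ≤ m) (hgm : m ∈ lowerBounds (range g))
    (hx : x ∈ AddSubmonoid.closure (range g)) : x = 0 ∨ x ∈ range g ∨ 2 * m ≤ x := by
  induction hx using AddSubmonoid.closure_induction with
  | mem y hy => exact .inr (.inl hy)
  | zero => exact .inl rfl
  | add y z _ _ hy hz =>
    have eq_zero_or_le : ∀ w, (w = 0 ∨ w ∈ range g ∨ 2 * m ≤ w) → w = 0 ∨ m ≤ w := by
      rintro w (h | h | h)
      · exact .inl h
      · exact .inr (hgm h)
      · exact .inr (by linarith)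
    rcases eq_zero_or_le y hy with rfl | hmy
    · simpa using hz
    rcases eq_zero_or_le z hz with rfl | hmz
    · simpa using hy
    exact .inr (.inr (by linarith))

theorem le_of_mem_closure_range (hm : 0 ≤ m) (hgm : m ∈ lowerBounds (range g))
    (hx : x ∈ AddSubmonoid.closure (range g)) (hx0 : x ≠ 0) : m ≤ x := by
  rcases eq_zero_or_mem_range_or_two_mul_le hm hgm hx with h | h | h
  · exact absurd h hx0
  · exact hgm h
  · linarith

theorem one_le_ncard_inter_Icc (S : AddSubmonoid ℤ) {F : ℤ} (hF : 0 ≤ F) :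
    1 ≤ ((S : Set ℤ) ∩ Icc 0 F).ncard :=
  (ncard_pos ((finite_Icc 0 F).subset inter_subset_right)).2 ⟨0, S.zero_mem, le_rfl, hF⟩

theorem le_ncard_range_of_forall_le_mem [Finite ι] (hm : 0 < m) (hgm : m ∈ lowerBounds (range g))
    (hcond : ∀ x, m ≤ x → x ∈ AddSubmonoid.closure (range g)) : m ≤ (range g).ncard := by
  have hsub : Ico m (2 * m) ⊆ range g := fun x ⟨hmx, hx2m⟩ ↦ by
    rcases eq_zero_or_mem_range_or_two_mul_le hm.le hgm (hcond x hmx) with h | h | h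
    · linarith
    · exact h
    · linarith
  calc m = (Ico m (2 * m)).ncard := by
        rw [← Finset.coe_Ico, ncard_coe_finset, Int.card_Ico]; omega
    _ ≤ (range g).ncard := by exact_mod_cast ncard_le_ncard hsub (finite_range g)

end Closure

def unmatchedGaps (S : Set ℤ) (F : ℤ) : Set ℤ := {x ∈ Icc 0 F | x ∉ S ∧ F - x ∉ S}

theorem finite_unmatchedGaps (S : Set ℤ) (F : ℤ) : (unmatchedGaps S F).Finite :=
  (finite_Icc 0 F).subset fun _ hx ↦ hx.1

theorem add_one_le_two_mul_ncard_add_ncard_unmatchedGaps (S : Set ℤ) (F : ℤ) :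
    F + 1 ≤ 2 * ((S ∩ Icc 0 F).ncard : ℤ) + (unmatchedGaps S F).ncard := by
  set N := S ∩ Icc 0 F
  have hN : N.Finite := (finite_Icc 0 F).subset inter_subset_right
  have hcover : Icc 0 F ⊆ N ∪ (F - ·) '' N ∪ unmatchedGaps S F := by
    intro x hx
    by_cases hxS : x ∈ S
    · exact .inl (.inl ⟨hxS, hx⟩)
    by_cases hFxS : F - x ∈ S
    · refine .inl (.inr ⟨F - x, ⟨hFxS, ?_, ?_⟩, sub_sub_cancel F x⟩) <;>
        linarith [hx.1, hx.2]
    · exact .inr ⟨hx, hxS, hFxS⟩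
  have hcard : (Icc 0 F).ncard ≤ 2 * N.ncard + (unmatchedGaps S F).ncard := by
    have := ncard_le_ncard hcover
      ((hN.union (hN.image _)).union (finite_unmatchedGaps S F))
    have := ncard_union_le (N ∪ (F - ·) '' N) (unmatchedGaps S F)
    have := ncard_union_le N ((F - ·) '' N)
    have := ncard_image_le (f := (F - ·)) hN
    omega
  calc F + 1 ≤ ((Icc 0 F).ncard : ℤ) := by
        rw [← Finset.coe_Icc, ncard_coe_finset, Int.card_Icc, sub_zero]; exact Int.self_le_toNat _
    _ ≤ _ := by exact_mod_cast hcard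

section AlmostSymmetric

variable {ι : Type*} {g : ι → ℤ} {m F : ℤ}

local notation "S" => ((AddSubmonoid.closure (range g) : AddSubmonoid ℤ) : Set ℤ)

theorem ncard_unmatchedGaps_sep_add_le_add_two_le (hmin : IsLeast (range g) m) (hm : 0 < m)
    (hmF : m ≤ F) (hadd : ∀ x ∈ unmatchedGaps S F, x + m ∈ S) :
    {x ∈ unmatchedGaps S F | x + m ≤ F}.ncard + 2 ≤ (S ∩ Icc 0 F).ncard := by
  have hN : (S ∩ Icc 0 F).Finite := (finite_Icc 0 F).subset inter_subset_right
  have h0m : ({0, m} : Set ℤ) ⊆ S ∩ Icc 0 F := by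
    rintro _ (rfl | rfl)
    · exact ⟨zero_mem _, le_rfl, hm.le.trans hmF⟩
    · exact ⟨AddSubmonoid.subset_closure hmin.1, hm.le, hmF⟩
  have hmaps :
      ∀ x ∈ {x ∈ unmatchedGaps S F | x + m ≤ F}, x + m ∈ (S ∩ Icc 0 F) \ {0, m} := by
    rintro x ⟨hxU, hxF⟩
    have hx0 : x ≠ 0 := by rintro rfl; exact hxU.2.1 (zero_mem _)
    have hx : 0 ≤ x := hxU.1.1
    refine ⟨⟨hadd x hxU, by linarith, hxF⟩, ?_⟩
    simp only [mem_insert_iff, mem_singleton_iff, not_or]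
    omega
  have hinj := ncard_le_ncard_of_injOn _ hmaps (fun x _ y _ h ↦ add_right_cancel h) hN.sdiff
  have h2 : 2 ≤ (S ∩ Icc 0 F).ncard := ncard_pair hm.ne ▸ ncard_le_ncard h0m hN
  rw [ncard_sdiff h0m, ncard_pair hm.ne] at hinj
  omega

theorem ncard_unmatchedGaps_sep_lt_add_add_one_le [Finite ι] (hmin : IsLeast (range g) m)
    (hm : 0 < m) (hadd : ∀ x ∈ unmatchedGaps S F, F - x + m ∈ S) :
    {x ∈ unmatchedGaps S F | F < x + m}.ncard + 1 ≤ (range g).ncard := by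
  have hmaps : ∀ x ∈ {x ∈ unmatchedGaps S F | F < x + m}, F - x + m ∈ range g \ {m} := by
    rintro x ⟨hxU, hxF⟩
    have hFx0 : F - x ≠ 0 := fun h ↦ hxU.2.2 (h ▸ zero_mem _)
    have hFx : 0 ≤ F - x := by linarith [hxU.1.2]
    rcases eq_zero_or_mem_range_or_two_mul_le hm.le hmin.2 (hadd x hxU) with h | h | h
    · omega
    · exact ⟨h, by simpa using hFx0⟩
    · omega
  have hinj := ncard_le_ncard_of_injOn _ hmaps (fun x _ y _ h ↦ by simpa using h)
    (finite_range g).sdiff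
  have h1 := (ncard_pos (finite_range g)).2 ⟨m, hmin.1⟩
  rw [ncard_sdiff (singleton_subset_iff.2 hmin.1), ncard_singleton] at hinj
  omega

theorem ncard_unmatchedGaps_add_three_le [Finite ι] (hmin : IsLeast (range g) m) (hm : 0 < m)
    (hmF : m ≤ F) (hPF : ∀ x ∈ unmatchedGaps S F, x + m ∈ S ∧ F - x + m ∈ S) :
    (unmatchedGaps S F).ncard + 3 ≤ (S ∩ Icc 0 F).ncard + (range g).ncard := by
  have hsplit : unmatchedGaps S F ⊆
      {x ∈ unmatchedGaps S F | x + m ≤ F} ∪ {x ∈ unmatchedGaps S F | F < x + m} :=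
    fun x hx ↦ (le_or_gt (x + m) F).imp (⟨hx, ·⟩) (⟨hx, ·⟩)
  have hfin := finite_unmatchedGaps S F
  have := ncard_le_ncard hsplit ((hfin.sep _).union (hfin.sep _))
  have := ncard_union_le
    {x ∈ unmatchedGaps S F | x + m ≤ F} {x ∈ unmatchedGaps S F | F < x + m}
  have := ncard_unmatchedGaps_sep_add_le_add_two_le hmin hm hmF fun x hx ↦ (hPF x hx).1
  have := ncard_unmatchedGaps_sep_lt_add_add_one_le hmin hm fun x hx ↦ (hPF x hx).2
  omega

end AlmostSymmetric

section Pair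

variable {a b : ℤ}

theorem exists_eq_mul_add_mul_of_isCoprime (hab : IsCoprime a b) (hb : 0 < b) (x : ℤ) :
    ∃ u v : ℤ, 0 ≤ u ∧ u < b ∧ x = u * a + v * b := by
  obtain ⟨p, q, hpq⟩ := hab
  refine ⟨x * p % b, x * q + x * p / b * a, Int.emod_nonneg _ hb.ne',
    Int.emod_lt_of_pos _ hb, ?_⟩
  linear_combination (-a) * Int.emod_add_mul_ediv (x * p) b - x * hpq

theorem mul_add_mul_mem_closure_pair_iff (hab : IsCoprime a b) (ha : 0 ≤ a) (hb : 0 < b)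
    {u v : ℤ} (hu : 0 ≤ u) (hub : u < b) :
    u * a + v * b ∈ AddSubmonoid.closure {a, b} ↔ 0 ≤ v := by
  rw [AddSubmonoid.mem_closure_pair]
  constructor
  · rintro ⟨c, d, hcd⟩
    simp only [nsmul_eq_mul] at hcd
    obtain ⟨k, hk⟩ : b ∣ c - u :=
      hab.symm.dvd_of_dvd_mul_right ⟨v - d, by linear_combination hcd⟩
    have hk0 : 0 ≤ k := by nlinarith
    have hv : v = k * a + d := mul_right_cancel₀ hb.ne' (by linear_combination hk * a - hcd)
    rw [hv]
    positivity
  · intro hv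
    exact ⟨u.toNat, v.toNat, by simp [hu, hv]⟩

theorem sub_mem_closure_pair_of_notMem (hab : IsCoprime a b) (ha : 0 ≤ a) (hb : 0 < b) {x : ℤ}
    (hx : x ∉ AddSubmonoid.closure {a, b}) :
    a * b - a - b - x ∈ AddSubmonoid.closure {a, b} := by
  obtain ⟨u, v, hu, hub, rfl⟩ := exists_eq_mul_add_mul_of_isCoprime hab hb x
  have hv : v < 0 :=
    not_le.1 fun hv ↦ hx ((mul_add_mul_mem_closure_pair_iff hab ha hb hu hub).2 hv)
  rw [show a * b - a - b - (u * a + v * b) = (b - 1 - u) * a + (-1 - v) * b by ring,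
    mul_add_mul_mem_closure_pair_iff hab ha hb (by linarith) (by linarith)]
  linarith

theorem mul_sub_sub_notMem_closure_pair (hab : IsCoprime a b) (ha : 0 ≤ a) (hb : 0 < b) :
    a * b - a - b ∉ AddSubmonoid.closure {a, b} := by
  rw [show a * b - a - b = (b - 1) * a + (-1) * b by ring,
    mul_add_mul_mem_closure_pair_iff hab ha hb (by linarith) (by linarith)]
  norm_num

theorem sub_mem_closure_pair_of_isGreatest_compl (hab : IsCoprime a b) (ha : 0 ≤ a) (hb : 0 < b)
    {F : ℤ} (hF : IsGreatest (AddSubmonoid.closure {a, b} : Set ℤ)ᶜ F) {x : ℤ}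
    (hx : x ∉ AddSubmonoid.closure {a, b}) : F - x ∈ AddSubmonoid.closure {a, b} := by
  obtain rfl : F = a * b - a - b := by
    obtain ⟨p, q, hpq⟩ :=
      (AddSubmonoid.mem_closure_pair _ _ _).1 (sub_mem_closure_pair_of_notMem hab ha hb hF.1)
    have : 0 ≤ a * b - a - b - F := hpq ▸ by positivity
    linarith [hF.2 (mul_sub_sub_notMem_closure_pair hab ha hb)]
  exact sub_mem_closure_pair_of_notMem hab ha hb hx

theorem unmatchedGaps_closure_pair_eq_empty (hab : IsCoprime a b) (ha : 0 ≤ a) (hb : 0 < b)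
    {F : ℤ} (hF : IsGreatest (AddSubmonoid.closure {a, b} : Set ℤ)ᶜ F) :
    unmatchedGaps (AddSubmonoid.closure {a, b}) F = ∅ :=
  eq_empty_of_forall_notMem fun _ hx ↦
    hx.2.2 (sub_mem_closure_pair_of_isGreatest_compl hab ha hb hF hx.2.1)

theorem unmatchedGaps_closure_range_fin_two_eq_empty {g : Fin 2 → ℤ} (h0 : 0 ≤ g 0)
    (h1 : 0 < g 1) (hcop : Finset.univ.gcd g = 1) {F : ℤ}
    (hF : IsGreatest (AddSubmonoid.closure (range g) : Set ℤ)ᶜ F) :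
    unmatchedGaps (AddSubmonoid.closure (range g)) F = ∅ := by
  rw [Finset.univ_fin2, Finset.gcd_insert, Finset.gcd_singleton,
    (normalize_associated _).gcd_eq_right] at hcop
  have hrange : range g = {g 0, g 1} := by ext; simp [Fin.exists_fin_two, eq_comm]
  rw [hrange] at hF ⊢
  exact unmatchedGaps_closure_pair_eq_empty ((gcd_isUnit_iff _ _).1 (hcop ▸ isUnit_one)) h0 h1 hF

end Pair

end NumericalSemigroup

open NumericalSemigroup

/-- **Corollary: almost-symmetric numerical semigroups satisfy Wilf's conjecture.**
Let `2 ≤ g₁ < g₂ < … < g_e` be coprime positive integers forming a minimal generating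
system of the numerical semigroup `S = ⟨g₁,…,g_e⟩`, let `F = max (ℤ \ S)` be the
Frobenius number and `n = |S ∩ [0, F]|`.  If `S` is almost-symmetric (for every
`x ∉ S`, either `F − x ∈ S` or both `x` and `F − x` are pseudo-Frobenius numbers),
then `F + 1 ≤ e·n`. -/
theorem almost_symmetric_wilf
    (e : ℕ) (he : 2 ≤ e) (g : Fin e → ℤ)
    (hg2 : 2 ≤ g ⟨0, by omega⟩)
    (hmono : StrictMono g)
    (hcop : Finset.univ.gcd g = 1)
    (S : Set ℤ)
    (hS : S = {x : ℤ | ∃ a : Fin e → ℕ, x = ∑ i, (a i : ℤ) * g i})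
    (F : ℤ) (hF : F ∉ S) (hFmax : ∀ x : ℤ, x ∉ S → x ≤ F)
    (n : ℕ) (hn : n = (S ∩ Set.Icc 0 F).ncard)
    (PF : Set ℤ) (hPF : PF = {x : ℤ | x ∉ S ∧ ∀ s ∈ S, s ≠ 0 → x + s ∈ S})
    (hAS : ∀ x : ℤ, x ∉ S → F - x ∈ S ∨ (x ∈ PF ∧ F - x ∈ PF)) :
    F + 1 ≤ (e : ℤ) * (n : ℤ) := by
  obtain rfl : S = AddSubmonoid.closure (range g) := by
    ext x
    simp [hS, AddSubmonoid.mem_closure_range_iff_of_fintype]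
  subst hPF
  have hcount := add_one_le_two_mul_ncard_add_ncard_unmatchedGaps (AddSubmonoid.closure (range g)) F
  rw [← hn] at hcount
  obtain rfl | he3 := he.eq_or_lt
  · have h0 : 2 ≤ g 0 := hg2
    rw [unmatchedGaps_closure_range_fin_two_eq_empty (by omega)
      (by linarith [hmono Fin.zero_lt_one]) hcop ⟨hF, hFmax⟩] at hcount
    simpa using hcount
  set m := g ⟨0, by omega⟩
  have hmin : IsLeast (range g) m :=
    ⟨mem_range_self _, forall_mem_range.2 fun i ↦ hmono.monotone (Nat.zero_le i.val)⟩
  have hm : 0 < m := by omega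
  have hrange : (range g).ncard = e := by
    rw [ncard_range_of_injective hmono.injective, Nat.card_fin]
  have hF0 : 0 ≤ F := zero_le_one.trans <|
    hFmax 1 fun h ↦ by linarith [le_of_mem_closure_range hm.le hmin.2 h one_ne_zero]
  have hn1 : 1 ≤ n := hn ▸ one_le_ncard_inter_Icc _ hF0
  obtain hmF | hFm := le_or_gt m F
  · have hmS := AddSubmonoid.subset_closure hmin.1
    have := ncard_unmatchedGaps_add_three_le hmin hm hmF fun x ⟨_, hx, hFx⟩ ↦
      have ⟨⟨_, hxPF⟩, ⟨_, hFxPF⟩⟩ := (hAS x hx).resolve_left hFx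
      ⟨hxPF m hmS hm.ne', hFxPF m hmS hm.ne'⟩
    rw [← hn, hrange] at this
    nlinarith
  · have := le_ncard_range_of_forall_le_mem hm hmin.2 fun x hx ↦
      by_contra fun h ↦ (hFmax x h).not_gt (hFm.trans_le hx)
    rw [hrange] at this
    nlinarith
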